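/- Let A:𝕋→SL(2,ℝ) be continuous, ω nonresonant, and suppose v:𝕋→ℂ²∖{0} is continuous with v(θ+2πω)=e^{-iφ}A(θ)v(θ). If v(θ) and v̄(θ) are linearly dependent for every θ, and there exist a continuous h:𝕋→ℝ and k∈ℤ with v̄(t)=e^{i(h(t)+kt)}v(t) for all t, then φ satisfies φ=π(j+kω) mod 2π for some integer j. -/

import Mathlib

/-!
Conjugating `v(θ + 2πω) = e^{-iφ} A(θ) v(θ)` with `A` real and inserting `v̄ = e^{i(h + kt)} v` at
both `θ` and `θ + 2πω` gives `h(θ + 2πω) - h(θ) ≡ 2φ - 2πkω (mod 2π)` at every point. Comparing a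
maximum and a minimum of `h`, the left side vanishes somewhere, so `2φ - 2πkω ∈ 2πℤ`.
-/

open Complex Matrix

theorem exists_comp_apply_eq_apply {X : Type*} [TopologicalSpace X] [CompactSpace X]
    [PreconnectedSpace X] [Nonempty X] {f : X → X} (hf : Continuous f) {h : X → ℝ}
    (hh : Continuous h) : ∃ x, h (f x) = h x := by
  obtain ⟨xmax, -, hmax⟩ := isCompact_univ.exists_isMaxOn Set.univ_nonempty hh.continuousOn
  obtain ⟨xmin, -, hmin⟩ := isCompact_univ.exists_isMinOn Set.univ_nonempty hh.continuousOn
  have hzero : (0 : ℝ) ∈ Set.Icc (h (f xmax) - h xmax) (h (f xmin) - h xmin) :=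
    ⟨sub_nonpos.2 (hmax (Set.mem_univ _)), sub_nonneg.2 (hmin (Set.mem_univ _))⟩
  obtain ⟨x, hx⟩ := intermediate_value_univ xmax xmin ((hh.comp hf).sub hh) hzero
  exact ⟨x, sub_eq_zero.1 hx⟩

theorem star_map_ofReal_mulVec {n : Type*} [Fintype n] (M : Matrix n n ℝ) (u : n → ℂ) :
    star (M.map ofReal *ᵥ u) = M.map ofReal *ᵥ star u := by
  ext i
  simp [Matrix.mulVec, dotProduct, Complex.conj_ofReal]

theorem exists_int_of_star_eq_exp_smul {n : Type*} [Fintype n] (M : Matrix n n ℝ)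
    {u w : n → ℂ} (hw0 : w ≠ 0) {φ α β : ℝ}
    (hsol : w = exp (-I * φ) • M.map ofReal *ᵥ u)
    (hu : star u = exp (I * α) • u) (hw : star w = exp (I * β) • w) :
    ∃ m : ℤ, β = 2 * φ + α + 2 * Real.pi * m := by
  have hexp : exp (I * β) • w = exp (I * (2 * φ + α)) • w := by
    calc exp (I * β) • w = star w := hw.symm
      _ = exp (I * φ) • M.map ofReal *ᵥ star u := by
        rw [hsol, star_smul, star_map_ofReal_mulVec, Complex.star_def, ← exp_conj]
        simp
      _ = exp (I * (2 * φ + α)) • w := by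
        rw [hu, Matrix.mulVec_smul, hsol, smul_smul, smul_smul, ← exp_add, ← exp_add]
        congr 2
        ring
  obtain ⟨m, hm⟩ := exp_eq_exp_iff_exists_int.1 (smul_left_injective ℂ hw0 hexp)
  refine ⟨m, ?_⟩
  have : I * ((β : ℝ) : ℂ) = I * ((2 * φ + α + 2 * Real.pi * m : ℝ) : ℂ) := by
    rw [hm]
    push_cast
    ring
  exact_mod_cast mul_left_cancel₀ I_ne_zero this

theorem dependent_conjugate_forces_resonant_exponent_general
    (ω φ : ℝ)
    (A : AddCircle (2 * Real.pi) → Matrix.SpecialLinearGroup (Fin 2) ℝ)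
    (v : AddCircle (2 * Real.pi) → Fin 2 → ℂ)
    (hvne : ∀ θ, v θ ≠ 0)
    (hsol : ∀ θ : AddCircle (2 * Real.pi),
      v (θ + ((2 * Real.pi * ω : ℝ) : AddCircle (2 * Real.pi)))
        = Complex.exp (-Complex.I * φ) •
            (((A θ : Matrix (Fin 2) (Fin 2) ℝ)).map Complex.ofReal).mulVec (v θ))
    (h : AddCircle (2 * Real.pi) → ℝ) (hh : Continuous h) (k : ℤ)
    (hrel : ∀ t : ℝ,
      (fun i => starRingEnd ℂ (v ((t : AddCircle (2 * Real.pi))) i))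
        = Complex.exp (Complex.I * ((h (t : AddCircle (2 * Real.pi)) : ℝ) + (k : ℝ) * t))
            • v (t : AddCircle (2 * Real.pi))) :
    ∃ j m : ℤ, φ = Real.pi * ((j : ℝ) + (k : ℝ) * ω) + 2 * Real.pi * (m : ℝ) := by
  have : Fact (0 < 2 * Real.pi) := ⟨by positivity⟩
  obtain ⟨θ, hθ⟩ := exists_comp_apply_eq_apply
    (continuous_add_const ((2 * Real.pi * ω : ℝ) : AddCircle (2 * Real.pi))) hh
  obtain ⟨t, rfl⟩ := QuotientAddGroup.mk_surjective θ
  have hconj : ∀ s : ℝ, star (v s) = exp (I * (h s + k * s : ℝ)) • v s := by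
    intro s
    push_cast
    exact hrel s
  obtain ⟨n, hn⟩ := exists_int_of_star_eq_exp_smul _ (hvne _) (hsol t) (hconj t)
    (hconj (t + 2 * Real.pi * ω))
  refine ⟨-n, 0, ?_⟩
  have hθ' : h (t + 2 * Real.pi * ω : ℝ) = h t := hθ
  push_cast
  linarith

/-- If `A : 𝕋 → SL(2,ℝ)` is continuous, `ω` nonresonant, `v : 𝕋 → ℂ² \ {0}` continuous with
`v(θ + 2πω) = e^{-iφ} A(θ) v(θ)`, and `v(θ)`, `v̄(θ)` are linearly dependent for every `θ`,
witnessed by a continuous `h : 𝕋 → ℝ` and `k ∈ ℤ` with `v̄(t) = e^{i(h(t) + kt)} v(t)` for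
all `t`, then `φ = π(j + kω) (mod 2π)` for some integer `j`. -/
theorem dependent_conjugate_forces_resonant_exponent
    (ω φ : ℝ)
    (hnonres : ∀ k : ℤ, k ≠ 0 → Real.sin (2 * Real.pi * k * ω) ≠ 0)
    (A : AddCircle (2 * Real.pi) → Matrix.SpecialLinearGroup (Fin 2) ℝ)
    (hA : Continuous fun θ => ((A θ : Matrix (Fin 2) (Fin 2) ℝ)))
    (v : AddCircle (2 * Real.pi) → Fin 2 → ℂ)
    (hv : Continuous v)
    (hvne : ∀ θ, v θ ≠ 0)
    (hsol : ∀ θ : AddCircle (2 * Real.pi),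
      v (θ + ((2 * Real.pi * ω : ℝ) : AddCircle (2 * Real.pi)))
        = Complex.exp (-Complex.I * φ) •
            (((A θ : Matrix (Fin 2) (Fin 2) ℝ)).map Complex.ofReal).mulVec (v θ))
    (hdep : ∀ θ : AddCircle (2 * Real.pi),
      ¬ LinearIndependent ℂ ![v θ, fun i => starRingEnd ℂ (v θ i)])
    (h : AddCircle (2 * Real.pi) → ℝ) (hh : Continuous h) (k : ℤ)
    (hrel : ∀ t : ℝ,
      (fun i => starRingEnd ℂ (v ((t : AddCircle (2 * Real.pi))) i))
        = Complex.exp (Complex.I * ((h (t : AddCircle (2 * Real.pi)) : ℝ) + (k : ℝ) * t))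
            • v (t : AddCircle (2 * Real.pi))) :
    ∃ j m : ℤ, φ = Real.pi * ((j : ℝ) + (k : ℝ) * ω) + 2 * Real.pi * (m : ℝ) :=
  dependent_conjugate_forces_resonant_exponent_general ω φ A v hvne hsol h hh k hrel
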